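/- arXiv:1307.0350 — 3 statements merged into one kernel-verified Lean document; each statement's English description precedes it below -/
import Mathlib

section
/- Let Ω ⊆ ℝ³ be an open set and ω ∈ ℂ with ω ≠ 0. Let ε : Ω → ℂ^{3×3} be of class C², μ : Ω → ℂ^{3×3} of class C¹, and let E, H : Ω → ℂ³ be of class C², J_e : Ω → ℂ³ of class C² and J_m : Ω → ℂ³ of class C¹. Assume the time-harmonic Maxwell system holds pointwise on Ω: curl H = iωεE + J_e and curl E = −iωμH + J_m. Then for each k ∈ {1,2,3} the k-th component E_k of E satisfies, pointwise on Ω, the second-order divergence-form equation −div(ε∇E_k) = div((∂_k ε)E − ε(e_k × (J_m − iωμH)) − (i/ω) e_k div J_e), where ∇E_k = (∂₁E_k, ∂₂E_k, ∂₃E_k). -/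
open Matrix MeasureTheory

noncomputable section

/-- Partial derivative of a scalar function in the j-th coordinate direction. -/
def pd3 (j : Fin 3) (f : (Fin 3 → ℝ) → ℂ) (x : Fin 3 → ℝ) : ℂ :=
  fderiv ℝ f x (Pi.single j 1)

/-- Divergence of a vector field. -/
def vdiv (F : (Fin 3 → ℝ) → Fin 3 → ℂ) (x : Fin 3 → ℝ) : ℂ :=
  ∑ j : Fin 3, pd3 j (fun y => F y j) x

/-- Curl of a vector field. -/
def vcurl (F : (Fin 3 → ℝ) → Fin 3 → ℂ) (x : Fin 3 → ℝ) : Fin 3 → ℂ :=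
  ![pd3 1 (fun y => F y 2) x - pd3 2 (fun y => F y 1) x,
    pd3 2 (fun y => F y 0) x - pd3 0 (fun y => F y 2) x,
    pd3 0 (fun y => F y 1) x - pd3 1 (fun y => F y 0) x]

/-- Gradient of a scalar function. -/
def grad3 (u : (Fin 3 → ℝ) → ℂ) (x : Fin 3 → ℝ) : Fin 3 → ℂ := fun j => pd3 j u x

/-- Cross product on ℂ³. -/
def cross3 (a b : Fin 3 → ℂ) : Fin 3 → ℂ :=
  ![a 1 * b 2 - a 2 * b 1, a 2 * b 0 - a 0 * b 2, a 0 * b 1 - a 1 * b 0]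

/-- The k-th standard basis vector of ℝ³ viewed in ℂ³. -/
def e3 (k : Fin 3) : Fin 3 → ℂ := Pi.single k 1

/-- Entrywise partial derivative of a matrix field in the k-th direction. -/
def mpd3 (k : Fin 3) (a : (Fin 3 → ℝ) → Matrix (Fin 3) (Fin 3) ℂ) (x : Fin 3 → ℝ) :
    Matrix (Fin 3) (Fin 3) ℂ :=
  Matrix.of fun i j => pd3 k (fun y => a y i j) x

/-!
Write `D = εE`. Ampère's law gives `iω div D + div J_e = div curl H = 0`, i.e.
`div D = (i/ω) div J_e`. Faraday's law identifies `J_m − iωμH` with `curl E`, and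
`e_k × curl E = ∇E_k − ∂_k E`, so by the product rule the field under the divergence on the right
is `∂_k D − ε∇E_k − (i/ω)(div J_e) e_k`. Since `∂_k` commutes with `div` on the `C²` field `D`,
its divergence is `∂_k div D − div(ε∇E_k) − (i/ω) ∂_k div J_e = −div(ε∇E_k)`.
-/

def vpd3 (k : Fin 3) (F : (Fin 3 → ℝ) → Fin 3 → ℂ) (x : Fin 3 → ℝ) : Fin 3 → ℂ :=
  fun i => pd3 k (fun y => F y i) x

section Calculus

variable {x : Fin 3 → ℝ} {f g : (Fin 3 → ℝ) → ℂ}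

theorem Filter.EventuallyEq.pd3_eq (h : f =ᶠ[nhds x] g) (j : Fin 3) : pd3 j f x = pd3 j g x := by
  rw [pd3, pd3, h.fderiv_eq]

theorem pd3_add (hf : DifferentiableAt ℝ f x) (hg : DifferentiableAt ℝ g x) (j : Fin 3) :
    pd3 j (fun y => f y + g y) x = pd3 j f x + pd3 j g x := by
  rw [pd3, fderiv_fun_add hf hg]; rfl

theorem pd3_sub (hf : DifferentiableAt ℝ f x) (hg : DifferentiableAt ℝ g x) (j : Fin 3) :
    pd3 j (fun y => f y - g y) x = pd3 j f x - pd3 j g x := by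
  rw [pd3, fderiv_fun_sub hf hg]; rfl

theorem pd3_const_mul (hf : DifferentiableAt ℝ f x) (c : ℂ) (j : Fin 3) :
    pd3 j (fun y => c * f y) x = c * pd3 j f x := by
  rw [pd3, fderiv_const_mul hf c]; rfl

theorem pd3_mul_const (hf : DifferentiableAt ℝ f x) (c : ℂ) (j : Fin 3) :
    pd3 j (fun y => f y * c) x = pd3 j f x * c := by
  simpa only [mul_comm] using pd3_const_mul hf c j

theorem pd3_mul (hf : DifferentiableAt ℝ f x) (hg : DifferentiableAt ℝ g x) (j : Fin 3) :
    pd3 j (fun y => f y * g y) x = pd3 j f x * g x + f x * pd3 j g x := by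
  simp only [pd3, fderiv_fun_mul hf hg, _root_.add_apply, _root_.smul_apply, smul_eq_mul]
  ring

theorem pd3_sum {ι : Type*} [Fintype ι] {f : ι → (Fin 3 → ℝ) → ℂ}
    (hf : ∀ i, DifferentiableAt ℝ (f i) x) (j : Fin 3) :
    pd3 j (fun y => ∑ i, f i y) x = ∑ i, pd3 j (f i) x := by
  rw [pd3, fderiv_fun_sum fun i _ => hf i]; simp [pd3]

theorem differentiableAt_pd3 (hf : ContDiffAt ℝ 2 f x) (j : Fin 3) :
    DifferentiableAt ℝ (pd3 j f) x :=
  ((hf.fderiv_right (m := 1) le_rfl).differentiableAt one_ne_zero).clm_apply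
    (differentiableAt_const _)

theorem pd3_comm (hf : ContDiffAt ℝ 2 f x) (i j : Fin 3) :
    pd3 i (pd3 j f) x = pd3 j (pd3 i f) x := by
  have hd : DifferentiableAt ℝ (fderiv ℝ f) x :=
    (hf.fderiv_right (m := 1) le_rfl).differentiableAt one_ne_zero
  have hsnd : ∀ i j : Fin 3,
      pd3 i (pd3 j f) x = fderiv ℝ (fderiv ℝ f) x (Pi.single i 1) (Pi.single j 1) := fun i j => by
    change fderiv ℝ (fun y => fderiv ℝ f y _) x _ = _
    rw [fderiv_clm_apply hd (differentiableAt_const _)]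
    simp
  rw [hsnd, hsnd]
  exact hf.isSymmSndFDerivAt (by simp [minSmoothness_of_isRCLikeNormedField]) _ _

end Calculus

section VectorCalculus

variable {x : Fin 3 → ℝ} {F G : (Fin 3 → ℝ) → Fin 3 → ℂ}

theorem Filter.EventuallyEq.vdiv_eq (h : F =ᶠ[nhds x] G) : vdiv F x = vdiv G x :=
  Finset.sum_congr rfl fun j _ => (h.fun_comp (· j)).pd3_eq j

theorem vdiv_add (hF : DifferentiableAt ℝ F x) (hG : DifferentiableAt ℝ G x) :
    vdiv (fun y => F y + G y) x = vdiv F x + vdiv G x := by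
  simp only [vdiv, Pi.add_apply, ← Finset.sum_add_distrib]
  exact Finset.sum_congr rfl fun j _ =>
    pd3_add (differentiableAt_pi.1 hF j) (differentiableAt_pi.1 hG j) j

theorem vdiv_sub (hF : DifferentiableAt ℝ F x) (hG : DifferentiableAt ℝ G x) :
    vdiv (fun y => F y - G y) x = vdiv F x - vdiv G x := by
  simp only [vdiv, Pi.sub_apply, ← Finset.sum_sub_distrib]
  exact Finset.sum_congr rfl fun j _ =>
    pd3_sub (differentiableAt_pi.1 hF j) (differentiableAt_pi.1 hG j) j

theorem vdiv_const_smul (hF : DifferentiableAt ℝ F x) (c : ℂ) :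
    vdiv (fun y => c • F y) x = c * vdiv F x := by
  simp only [vdiv, Pi.smul_apply, smul_eq_mul, Finset.mul_sum]
  exact Finset.sum_congr rfl fun j _ => pd3_const_mul (differentiableAt_pi.1 hF j) c j

theorem vdiv_smul_e3 {f : (Fin 3 → ℝ) → ℂ} (hf : DifferentiableAt ℝ f x) (k : Fin 3) :
    vdiv (fun y => f y • e3 k) x = pd3 k f x := by
  simp only [vdiv, Pi.smul_apply, smul_eq_mul, pd3_mul_const hf]
  simp [e3, Pi.single_apply]

theorem vdiv_vpd3 (hF : ContDiffAt ℝ 2 F x) (k : Fin 3) :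
    vdiv (vpd3 k F) x = pd3 k (vdiv F) x := by
  have hFi := contDiffAt_pi.1 hF
  calc vdiv (vpd3 k F) x = ∑ i, pd3 k (pd3 i (fun y => F y i)) x :=
        Finset.sum_congr rfl fun i _ => pd3_comm (hFi i) i k
    _ = pd3 k (vdiv F) x := (pd3_sum (fun i => differentiableAt_pd3 (hFi i) i) k).symm

theorem vdiv_vcurl (hF : ContDiffAt ℝ 2 F x) : vdiv (vcurl F) x = 0 := by
  have hFi := contDiffAt_pi.1 hF
  have hd := fun i j => differentiableAt_pd3 (hFi i) j
  simp only [vdiv, vcurl, Fin.sum_univ_three, Matrix.cons_val]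
  rw [pd3_sub (hd 2 1) (hd 1 2), pd3_sub (hd 0 2) (hd 2 0), pd3_sub (hd 1 0) (hd 0 1),
    pd3_comm (hFi 2) 0 1, pd3_comm (hFi 1) 0 2, pd3_comm (hFi 0) 1 2]
  ring

theorem cross3_e3_vcurl (F : (Fin 3 → ℝ) → Fin 3 → ℂ) (x : Fin 3 → ℝ) (k : Fin 3) :
    cross3 (e3 k) (vcurl F x) = grad3 (fun y => F y k) x - vpd3 k F x := by
  funext j
  fin_cases k <;> fin_cases j <;> simp [cross3, e3, vcurl, grad3, vpd3]

theorem vpd3_mulVec {a : (Fin 3 → ℝ) → Matrix (Fin 3) (Fin 3) ℂ}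
    (ha : ∀ i j, DifferentiableAt ℝ (fun y => a y i j) x) (hF : DifferentiableAt ℝ F x)
    (k : Fin 3) : vpd3 k (fun y => a y *ᵥ F y) x = mpd3 k a x *ᵥ F x + a x *ᵥ vpd3 k F x := by
  have hFj := differentiableAt_pi.1 hF
  funext i
  simp only [vpd3, mulVec, dotProduct, mpd3, of_apply, Pi.add_apply, ← Finset.sum_add_distrib]
  rw [pd3_sum fun j => (ha i j).fun_mul (hFj j)]
  exact Finset.sum_congr rfl fun j _ => pd3_mul (ha i j) (hFj j) k

theorem contDiffAt_mulVec {n : WithTop ℕ∞} {a : (Fin 3 → ℝ) → Matrix (Fin 3) (Fin 3) ℂ}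
    (ha : ∀ i j, ContDiffAt ℝ n (fun y => a y i j) x) (hF : ContDiffAt ℝ n F x) :
    ContDiffAt ℝ n (fun y => a y *ᵥ F y) x :=
  contDiffAt_pi.2 fun i => (ContDiffAt.sum fun j _ => (ha i j).mul (contDiffAt_pi.1 hF j) :
    ContDiffAt ℝ n (fun y => ∑ j, a y i j * F y j) x)

theorem differentiableAt_mulVec {a : (Fin 3 → ℝ) → Matrix (Fin 3) (Fin 3) ℂ}
    (ha : ∀ i j, DifferentiableAt ℝ (fun y => a y i j) x) (hF : DifferentiableAt ℝ F x) :
    DifferentiableAt ℝ (fun y => a y *ᵥ F y) x :=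
  differentiableAt_pi.2 fun i =>
    (DifferentiableAt.fun_sum fun j _ => (ha i j).fun_mul (differentiableAt_pi.1 hF j) :
      DifferentiableAt ℝ (fun y => ∑ j, a y i j * F y j) x)

theorem differentiableAt_grad3 {u : (Fin 3 → ℝ) → ℂ} (hu : ContDiffAt ℝ 2 u x) :
    DifferentiableAt ℝ (grad3 u) x :=
  differentiableAt_pi.2 fun j => differentiableAt_pd3 hu j

theorem differentiableAt_vpd3 (hF : ContDiffAt ℝ 2 F x) (k : Fin 3) :
    DifferentiableAt ℝ (vpd3 k F) x :=
  differentiableAt_pi.2 fun i => differentiableAt_pd3 (contDiffAt_pi.1 hF i) k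

theorem differentiableAt_vdiv (hF : ContDiffAt ℝ 2 F x) : DifferentiableAt ℝ (vdiv F) x :=
  DifferentiableAt.fun_sum fun j _ => differentiableAt_pd3 (contDiffAt_pi.1 hF j) j

end VectorCalculus

section Maxwell

variable {x : Fin 3 → ℝ}

theorem mul_vdiv_add_vdiv_eq_zero_of_vcurl_eq {H G J : (Fin 3 → ℝ) → Fin 3 → ℂ} {c : ℂ}
    (hcurl : vcurl H =ᶠ[nhds x] fun y => c • G y + J y) (hH : ContDiffAt ℝ 2 H x)
    (hG : DifferentiableAt ℝ G x) (hJ : DifferentiableAt ℝ J x) :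
    c * vdiv G x + vdiv J x = 0 := by
  rw [← vdiv_const_smul hG c, ← vdiv_add (hG.fun_const_smul c) hJ, ← hcurl.vdiv_eq, vdiv_vcurl hH]

theorem mpd3_mulVec_sub_mulVec_cross3_vcurl {a : (Fin 3 → ℝ) → Matrix (Fin 3) (Fin 3) ℂ}
    {E : (Fin 3 → ℝ) → Fin 3 → ℂ} (ha : ∀ i j, DifferentiableAt ℝ (fun y => a y i j) x)
    (hE : DifferentiableAt ℝ E x) (k : Fin 3) :
    mpd3 k a x *ᵥ E x - a x *ᵥ cross3 (e3 k) (vcurl E x)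
      = vpd3 k (fun y => a y *ᵥ E y) x - a x *ᵥ grad3 (fun y => E y k) x := by
  rw [cross3_e3_vcurl, vpd3_mulVec ha hE, mulVec_sub]
  abel

end Maxwell

theorem stmt_0_general
    (Ω : Set (Fin 3 → ℝ)) (hΩ : IsOpen Ω) (ω : ℂ) (hω : ω ≠ 0)
    (ε μ : (Fin 3 → ℝ) → Matrix (Fin 3) (Fin 3) ℂ)
    (E H Je Jm : (Fin 3 → ℝ) → Fin 3 → ℂ)
    (hε : ∀ i j, ContDiffOn ℝ 2 (fun x => ε x i j) Ω)
    (hE : ContDiffOn ℝ 2 E Ω) (hH : ContDiffOn ℝ 2 H Ω)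
    (hJe : ContDiffOn ℝ 2 Je Ω)
    (hM1 : ∀ x ∈ Ω, vcurl H x = (Complex.I * ω) • (ε x *ᵥ E x) + Je x)
    (hM2 : ∀ x ∈ Ω, vcurl E x = -((Complex.I * ω) • (μ x *ᵥ H x)) + Jm x) :
    ∀ x ∈ Ω, ∀ k : Fin 3,
      -vdiv (fun y => ε y *ᵥ grad3 (fun z => E z k) y) x
        = vdiv (fun y =>
            mpd3 k ε y *ᵥ E y
            - ε y *ᵥ cross3 (e3 k) (Jm y - (Complex.I * ω) • (μ y *ᵥ H y))
            - ((Complex.I / ω) * vdiv Je y) • e3 k) x := by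
  intro x hx k
  have hεΩ y (hy : y ∈ Ω) i j := (hε i j).contDiffAt (hΩ.mem_nhds hy)
  have hEΩ y (hy : y ∈ Ω) := hE.contDiffAt (hΩ.mem_nhds hy)
  have hJeΩ y (hy : y ∈ Ω) := hJe.contDiffAt (hΩ.mem_nhds hy)
  have hDΩ y (hy : y ∈ Ω) := contDiffAt_mulVec (hεΩ y hy) (hEΩ y hy)
  have gauss : ∀ y ∈ Ω, vdiv (fun z => ε z *ᵥ E z) y = Complex.I / ω * vdiv Je y := by
    intro y hy
    have h := mul_vdiv_add_vdiv_eq_zero_of_vcurl_eq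
      (Filter.eventuallyEq_of_mem (hΩ.mem_nhds hy) hM1) (hH.contDiffAt (hΩ.mem_nhds hy))
      ((hDΩ y hy).differentiableAt two_ne_zero) ((hJeΩ y hy).differentiableAt two_ne_zero)
    field_simp
    linear_combination (-Complex.I) * h + vdiv (fun z => ε z *ᵥ E z) y * ω * Complex.I_sq
  have field : (fun y =>
      mpd3 k ε y *ᵥ E y - ε y *ᵥ cross3 (e3 k) (Jm y - (Complex.I * ω) • (μ y *ᵥ H y))
        - ((Complex.I / ω) * vdiv Je y) • e3 k)
      =ᶠ[nhds x] fun y => vpd3 k (fun z => ε z *ᵥ E z) y - ε y *ᵥ grad3 (fun z => E z k) y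
        - ((Complex.I / ω) * vdiv Je y) • e3 k := by
    filter_upwards [hΩ.mem_nhds hx] with y hy
    rw [show Jm y - (Complex.I * ω) • (μ y *ᵥ H y) = vcurl E y by rw [hM2 y hy]; abel,
      mpd3_mulVec_sub_mulVec_cross3_vcurl (fun i j => (hεΩ y hy i j).differentiableAt two_ne_zero)
        ((hEΩ y hy).differentiableAt two_ne_zero)]
  have hvpd := differentiableAt_vpd3 (hDΩ x hx) k
  have hgrad := differentiableAt_mulVec (fun i j => (hεΩ x hx i j).differentiableAt two_ne_zero)
    (differentiableAt_grad3 (contDiffAt_pi.1 (hEΩ x hx) k))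
  have hdivJe := (differentiableAt_vdiv (hJeΩ x hx)).const_mul (Complex.I / ω)
  rw [field.vdiv_eq, vdiv_sub (hvpd.fun_sub hgrad) (hdivJe.smul_const (e3 k)), vdiv_sub hvpd hgrad,
    vdiv_vpd3 (hDΩ x hx), vdiv_smul_e3 hdivJe,
    (Filter.eventuallyEq_of_mem (hΩ.mem_nhds hx) gauss).pd3_eq]
  ring

/-- Strong form of the divergence-form elliptic equation satisfied by each component of the
electric field (Proposition 2.1, strong form). -/
theorem stmt_0
    (Ω : Set (Fin 3 → ℝ)) (hΩ : IsOpen Ω) (ω : ℂ) (hω : ω ≠ 0)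
    (ε μ : (Fin 3 → ℝ) → Matrix (Fin 3) (Fin 3) ℂ)
    (E H Je Jm : (Fin 3 → ℝ) → Fin 3 → ℂ)
    (hε : ∀ i j, ContDiffOn ℝ 2 (fun x => ε x i j) Ω)
    (hμ : ∀ i j, ContDiffOn ℝ 1 (fun x => μ x i j) Ω)
    (hE : ContDiffOn ℝ 2 E Ω) (hH : ContDiffOn ℝ 2 H Ω)
    (hJe : ContDiffOn ℝ 2 Je Ω) (hJm : ContDiffOn ℝ 1 Jm Ω)
    (hM1 : ∀ x ∈ Ω, vcurl H x = (Complex.I * ω) • (ε x *ᵥ E x) + Je x)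
    (hM2 : ∀ x ∈ Ω, vcurl E x = -((Complex.I * ω) • (μ x *ᵥ H x)) + Jm x) :
    ∀ x ∈ Ω, ∀ k : Fin 3,
      -vdiv (fun y => ε y *ᵥ grad3 (fun z => E z k) y) x
        = vdiv (fun y =>
            mpd3 k ε y *ᵥ E y
            - ε y *ᵥ cross3 (e3 k) (Jm y - (Complex.I * ω) • (μ y *ᵥ H y))
            - ((Complex.I / ω) * vdiv Je y) • e3 k) x :=
  stmt_0_general Ω hΩ ω hω ε μ E H Je Jm hε hE hH hJe hM1 hM2
end
end

section
/- Let ε₀, μ₀, χ, κ be real constants with ε₀ > 0 and μ₀ > 0, and set ε = ε₀ I₃, μ = μ₀ I₃, ξ = (χ − iκ) I₃, ζ = (χ + iκ) I₃, where I₃ is the 3×3 identity matrix. Let A be the 12×12 real block matrix A = [[Re ε, −Im ε, Re ξ, −Im ξ], [Im ε, Re ε, Im ξ, Re ξ], [Re ζ, −Im ζ, Re μ, −Im μ], [Im ζ, Re ζ, Im μ, Re μ]] = [[ε₀I₃, 0, χI₃, κI₃], [0, ε₀I₃, −κI₃, χI₃], [χI₃, −κI₃, μ₀I₃, 0], [κI₃,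 χI₃, 0, μ₀I₃]]. If χ² + κ² < ε₀ μ₀, then A satisfies the strong Legendre condition: there exists Λ > 0 such that ηᵀ A η ≥ Λ |η|² for every η ∈ ℝ¹². -/
open Matrix

noncomputable section

/-- The 4×4 array of scalar coefficients of the block matrix A. -/
def blockCoef (ε₀ μ₀ χ κ : ℝ) : Fin 4 → Fin 4 → ℝ :=
  ![![ε₀, 0, χ, κ], ![0, ε₀, -κ, χ], ![χ, -κ, μ₀, 0], ![κ, χ, 0, μ₀]]

/-- The 12×12 real block matrix A, each block being a scalar multiple of the 3×3 identity:
A = [[ε₀I₃, 0, χI₃, κI₃], [0, ε₀I₃, −κI₃, χI₃], [χI₃, −κI₃, μ₀I₃, 0], [κI₃, χI₃, 0, μ₀I₃]]. -/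
def Abig (ε₀ μ₀ χ κ : ℝ) : Matrix (Fin 12) (Fin 12) ℝ :=
  Matrix.of fun i j =>
    if (i : ℕ) % 3 = (j : ℕ) % 3 then
      blockCoef ε₀ μ₀ χ κ ⟨(i : ℕ) / 3, by have := i.isLt; omega⟩
        ⟨(j : ℕ) / 3, by have := j.isLt; omega⟩
    else 0

/-!
Since every block of `A` is a multiple of `I₃`, `A` is, up to reordering the coordinates,
`C ⊗ I₃` for the 4×4 coefficient matrix `C`, so it suffices to treat `C`. Writing
`z = η₀ + iη₁`, `w = η₂ + iη₃`, the form of `C` is `ε₀|z|² + μ₀|w|² + 2 Re((χ - iκ) z̄ w)`,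
which Cauchy–Schwarz and AM–GM make nonnegative once `χ² + κ² ≤ ε₀μ₀`. Applying this to
`ε₀ - Λ`, `μ₀ - Λ` for a small `Λ > 0` leaves the margin `Λ|η|²`.
-/

open scoped Kronecker

theorem chiral_form_nonneg {ε₀ μ₀ χ κ : ℝ} (hε : 0 ≤ ε₀) (hμ : 0 ≤ μ₀)
    (h : χ ^ 2 + κ ^ 2 ≤ ε₀ * μ₀) (a b c d : ℝ) :
    0 ≤ ε₀ * (a ^ 2 + b ^ 2) + μ₀ * (c ^ 2 + d ^ 2)
      + 2 * (χ * (a * c + b * d) + κ * (a * d - b * c)) := by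
  set p := a ^ 2 + b ^ 2
  set q := c ^ 2 + d ^ 2
  set cross := χ * (a * c + b * d) + κ * (a * d - b * c)
  have cauchy_schwarz : cross ^ 2 ≤ (χ ^ 2 + κ ^ 2) * (p * q) := by
    nlinarith [sq_nonneg (χ * (a * d - b * c) - κ * (a * c + b * d))]
  have am_gm : 4 * (ε₀ * μ₀) * (p * q) ≤ (ε₀ * p + μ₀ * q) ^ 2 := by
    nlinarith [sq_nonneg (ε₀ * p - μ₀ * q)]
  have hpq : 0 ≤ p * q := by positivity
  have hcross_sq : (2 * cross) ^ 2 ≤ (ε₀ * p + μ₀ * q) ^ 2 := by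
    nlinarith [mul_le_mul_of_nonneg_right h hpq]
  linarith [(abs_le_of_sq_le_sq' hcross_sq (by positivity)).1]

theorem dotProduct_blockCoef_mulVec (ε₀ μ₀ χ κ : ℝ) (x : Fin 4 → ℝ) :
    x ⬝ᵥ (of (blockCoef ε₀ μ₀ χ κ) *ᵥ x) = ε₀ * (x 0 ^ 2 + x 1 ^ 2) + μ₀ * (x 2 ^ 2 + x 3 ^ 2)
      + 2 * (χ * (x 0 * x 2 + x 1 * x 3) + κ * (x 0 * x 3 - x 1 * x 2)) := by
  simp only [dotProduct, mulVec, Fin.sum_univ_four, of_apply, blockCoef, Fin.isValue, cons_val',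
    cons_val_zero, cons_val_fin_one, cons_val_one, cons_val, zero_mul, add_zero, zero_add, neg_mul]
  ring

theorem isHermitian_blockCoef (ε₀ μ₀ χ κ : ℝ) : (of (blockCoef ε₀ μ₀ χ κ)).IsHermitian := by
  ext i j
  fin_cases i <;> fin_cases j <;> simp [blockCoef]

theorem posSemidef_blockCoef {ε₀ μ₀ χ κ : ℝ} (hε : 0 ≤ ε₀) (hμ : 0 ≤ μ₀)
    (h : χ ^ 2 + κ ^ 2 ≤ ε₀ * μ₀) : (of (blockCoef ε₀ μ₀ χ κ)).PosSemidef :=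
  .of_dotProduct_mulVec_nonneg (isHermitian_blockCoef ε₀ μ₀ χ κ) fun x => by
    rw [star_trivial, dotProduct_blockCoef_mulVec]
    exact chiral_form_nonneg hε hμ h _ _ _ _

theorem blockCoef_add_smul_one (ε₀ μ₀ χ κ t : ℝ) :
    of (blockCoef (ε₀ + t) (μ₀ + t) χ κ) = of (blockCoef ε₀ μ₀ χ κ) + t • 1 := by
  ext i j
  fin_cases i <;> fin_cases j <;> simp [blockCoef]

theorem Abig_eq_submatrix_kronecker (ε₀ μ₀ χ κ : ℝ) :
    Abig ε₀ μ₀ χ κ = (of (blockCoef ε₀ μ₀ χ κ) ⊗ₖ (1 : Matrix (Fin 3) (Fin 3) ℝ)).submatrix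
      finProdFinEquiv.symm finProdFinEquiv.symm := by
  ext i j
  simp [Abig, one_apply, finProdFinEquiv, Fin.ext_iff, Fin.modNat, Fin.divNat]

theorem posSemidef_Abig {ε₀ μ₀ χ κ : ℝ} (hε : 0 ≤ ε₀) (hμ : 0 ≤ μ₀)
    (h : χ ^ 2 + κ ^ 2 ≤ ε₀ * μ₀) : (Abig ε₀ μ₀ χ κ).PosSemidef := by
  rw [Abig_eq_submatrix_kronecker]
  exact ((posSemidef_blockCoef hε hμ h).kronecker PosSemidef.one).submatrix _

theorem Abig_add_smul_one (ε₀ μ₀ χ κ t : ℝ) :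
    Abig (ε₀ + t) (μ₀ + t) χ κ = Abig ε₀ μ₀ χ κ + t • 1 := by
  rw [Abig_eq_submatrix_kronecker, Abig_eq_submatrix_kronecker, blockCoef_add_smul_one,
    add_kronecker, smul_kronecker, one_kronecker_one, submatrix_add, submatrix_smul, Pi.add_apply,
    Pi.add_apply, Pi.smul_apply, Pi.smul_apply, submatrix_one_equiv]

theorem le_dotProduct_add_smul_one_mulVec {n : Type*} [Fintype n] [DecidableEq n]
    {B : Matrix n n ℝ} (hB : B.PosSemidef) (Λ : ℝ) (x : n → ℝ) :
    Λ * ∑ i, x i ^ 2 ≤ x ⬝ᵥ ((B + Λ • 1) *ᵥ x) := by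
  have hBx : 0 ≤ x ⬝ᵥ (B *ᵥ x) := by simpa using hB.dotProduct_mulVec_nonneg x
  have hxx : x ⬝ᵥ x = ∑ i, x i ^ 2 := by simp only [dotProduct, sq]
  rw [add_mulVec, smul_mulVec, one_mulVec, dotProduct_add, dotProduct_smul, smul_eq_mul, hxx]
  linarith

theorem exists_pos_le_mul_sub_sub {a b s : ℝ} (ha : 0 < a) (hb : 0 < b) (hs : 0 ≤ s)
    (h : s < a * b) : ∃ Λ > 0, Λ ≤ a ∧ Λ ≤ b ∧ s ≤ (a - Λ) * (b - Λ) := by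
  have hab : 0 < a + b := add_pos ha hb
  set Λ := (a * b - s) / (a + b)
  have hΛ : Λ * (a + b) = a * b - s := div_mul_cancel₀ _ hab.ne'
  refine ⟨Λ, div_pos (sub_pos.2 h) hab, ?_, ?_, ?_⟩
  · nlinarith
  · nlinarith
  · -- (a - Λ) * (b - Λ) = s + Λ ^ 2
    nlinarith [sq_nonneg Λ]

/-- Chiral materials with χ² + κ² < ε₀μ₀ satisfy the strong Legendre condition. -/
theorem stmt_5 (ε₀ μ₀ χ κ : ℝ) (hε : 0 < ε₀) (hμ : 0 < μ₀)
    (h : χ ^ 2 + κ ^ 2 < ε₀ * μ₀) :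
    ∃ Λ > 0, ∀ η : Fin 12 → ℝ,
      Λ * (∑ i, η i ^ 2) ≤ η ⬝ᵥ (Abig ε₀ μ₀ χ κ *ᵥ η) := by
  obtain ⟨Λ, hΛ, hΛε, hΛμ, hmargin⟩ := exists_pos_le_mul_sub_sub hε hμ (by positivity) h
  have hA : Abig ε₀ μ₀ χ κ = Abig (ε₀ - Λ) (μ₀ - Λ) χ κ + Λ • 1 := by
    simpa using Abig_add_smul_one (ε₀ - Λ) (μ₀ - Λ) χ κ Λ
  refine ⟨Λ, hΛ, fun η => ?_⟩
  rw [hA]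
  exact le_dotProduct_add_smul_one_mulVec
    (posSemidef_Abig (sub_nonneg.2 hΛε) (sub_nonneg.2 hΛμ) hmargin) Λ η
end
end

section
/- Let ε₀, μ₀, χ, κ be real constants and let A be the 12×12 real block matrix A = [[ε₀I₃, 0, χI₃, κI₃], [0, ε₀I₃, −κI₃, χI₃], [χI₃, −κI₃, μ₀I₃, 0], [κI₃, χI₃, 0, μ₀I₃]], where I₃ is the 3×3 identity matrix. Then A is symmetric and for every η ∈ ℝ¹² there holds ηᵀ A η ≥ ((ε₀ + μ₀ − √((ε₀ − μ₀)² + 4χ² + 4κ²))/2) |η|²; that is, the smallest eigenvalue of A is at least (ε₀ + μ₀ − √((ε₀ − μ₀)² + 4χ² + 4κ²))/2. -/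
open Matrix

noncomputable section

set_option maxHeartbeats 1000000 in
private lemma key0 (ε₀ μ₀ χ κ a b c d : ℝ) (ha0 : 0 ≤ a) (hb0 : 0 ≤ b)
    (hcd : c ^ 2 + d ^ 2 = a * b) :
    ((ε₀ + μ₀ - Real.sqrt ((ε₀ - μ₀) ^ 2 + 4 * χ ^ 2 + 4 * κ ^ 2)) / 2) * (a + b)
      ≤ ε₀ * a + μ₀ * b + 2 * χ * c + 2 * κ * d := by
  have hS0 : 0 ≤ Real.sqrt ((ε₀ - μ₀) ^ 2 + 4 * χ ^ 2 + 4 * κ ^ 2) := Real.sqrt_nonneg _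
  have hS2 : Real.sqrt ((ε₀ - μ₀) ^ 2 + 4 * χ ^ 2 + 4 * κ ^ 2) ^ 2
      = (ε₀ - μ₀) ^ 2 + 4 * χ ^ 2 + 4 * κ ^ 2 := by
    rw [Real.sq_sqrt]; positivity
  generalize hSdef : Real.sqrt ((ε₀ - μ₀) ^ 2 + 4 * χ ^ 2 + 4 * κ ^ 2) = S at *
  have hp : (χ * c + κ * d) ^ 2 ≤ (χ ^ 2 + κ ^ 2) * (a * b) := by
    nlinarith [sq_nonneg (χ * d - κ * c)]
  have main : (μ₀ - ε₀) * (a - b) - 4 * (χ * c + κ * d) ≤ S * (a + b) := by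
    rcases le_or_gt ((μ₀ - ε₀) * (a - b) - 4 * (χ * c + κ * d)) 0 with h | h
    · have : 0 ≤ S * (a + b) := mul_nonneg hS0 (by linarith)
      linarith
    · have hsq : ((μ₀ - ε₀) * (a - b) - 4 * (χ * c + κ * d)) ^ 2
          ≤ ((ε₀ - μ₀) ^ 2 + 4 * χ ^ 2 + 4 * κ ^ 2) * (a + b) ^ 2 := by
        rcases eq_or_lt_of_le (mul_nonneg ha0 hb0) with hab | hab
        · have hp0 : χ * c + κ * d = 0 := by nlinarith [sq_nonneg (χ * c + κ * d)]
          nlinarith [sq_nonneg (a + b), sq_nonneg (ε₀ - μ₀), sq_nonneg ((ε₀ - μ₀) * (a - b))]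
        · nlinarith [sq_nonneg (2 * (ε₀ - μ₀) * (a * b) - 2 * (a - b) * (χ * c + κ * d)),
            mul_nonneg (sq_nonneg (a + b))
              (by linarith : (0:ℝ) ≤ (χ ^ 2 + κ ^ 2) * (a * b) - (χ * c + κ * d) ^ 2),
            hab]
      have hSab : 0 ≤ S * (a + b) := mul_nonneg hS0 (by linarith)
      nlinarith [hsq, h, hSab, hS2]
  linarith [main]

private lemma key (ε₀ μ₀ χ κ x0 x1 x2 x3 : ℝ) :
    ((ε₀ + μ₀ - Real.sqrt ((ε₀ - μ₀) ^ 2 + 4 * χ ^ 2 + 4 * κ ^ 2)) / 2) *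
        (x0 ^ 2 + x1 ^ 2 + x2 ^ 2 + x3 ^ 2)
      ≤ ε₀ * (x0 ^ 2 + x1 ^ 2) + μ₀ * (x2 ^ 2 + x3 ^ 2)
        + 2 * χ * (x0 * x2 + x1 * x3) + 2 * κ * (x0 * x3 - x1 * x2) := by
  have := key0 ε₀ μ₀ χ κ (x0 ^ 2 + x1 ^ 2) (x2 ^ 2 + x3 ^ 2)
    (x0 * x2 + x1 * x3) (x0 * x3 - x1 * x2) (by positivity) (by positivity) (by ring)
  linarith


set_option maxHeartbeats 1000000 in
/-- A is symmetric and its smallest eigenvalue is at least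
(ε₀ + μ₀ − √((ε₀ − μ₀)² + 4χ² + 4κ²))/2, expressed via the quadratic form bound. -/
theorem stmt_6 (ε₀ μ₀ χ κ : ℝ) :
    (Abig ε₀ μ₀ χ κ).IsSymm ∧
    ∀ η : Fin 12 → ℝ,
      ((ε₀ + μ₀ - Real.sqrt ((ε₀ - μ₀) ^ 2 + 4 * χ ^ 2 + 4 * κ ^ 2)) / 2) * (∑ i, η i ^ 2)
        ≤ η ⬝ᵥ (Abig ε₀ μ₀ χ κ *ᵥ η) := by
  constructor
  · have hsym : ∀ p q : Fin 4, blockCoef ε₀ μ₀ χ κ p q = blockCoef ε₀ μ₀ χ κ q p := by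
      intro p q; fin_cases p <;> fin_cases q <;> simp [blockCoef]
    rw [Matrix.IsSymm]
    ext i j
    simp only [Matrix.transpose_apply, Abig, Matrix.of_apply]
    rcases eq_or_ne ((i : ℕ) % 3) ((j : ℕ) % 3) with h | h
    · rw [if_pos h, if_pos h.symm, hsym]
    · rw [if_neg h, if_neg (Ne.symm h)]
  · intro η
    have k0 := key ε₀ μ₀ χ κ (η 0) (η (Fin.succ 2)) (η ((Fin.succ 2).succ.succ.succ))
      (η ((Fin.succ 2).succ.succ.succ.succ.succ.succ))
    have k1 := key ε₀ μ₀ χ κ (η 1) (η ((Fin.succ 2).succ)) (η ((Fin.succ 2).succ.succ.succ.succ))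
      (η ((Fin.succ 2).succ.succ.succ.succ.succ.succ.succ))
    have k2 := key ε₀ μ₀ χ κ (η 2) (η ((Fin.succ 2).succ.succ))
      (η ((Fin.succ 2).succ.succ.succ.succ.succ))
      (η ((Fin.succ 2).succ.succ.succ.succ.succ.succ.succ.succ))
    simp only [dotProduct, mulVec, Abig, blockCoef, Fin.sum_univ_succ, Fin.sum_univ_zero,
      Matrix.of_apply]
    norm_num
    nlinarith [k0, k1, k2]
end
end
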